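/- Let κ : Sen → Sen be a retraction (anti-extensive on all sentences and satisfying the vacuum property on all sentences φ with Mod(φ) ≠ Triv). Let T be a knowledge base, τ a sentence with Mod(τ) = Mod(T), φ a sentence with Mod(T ∪ {φ}) ≠ Triv, and ∧ a semantic conjunction. Then both C_lcr = {Mod(κ^k(τ) ∧ φ) | k ∈ ℕ, Mod(κ^k(τ) ∧ φ) ≠ Triv} and C_lnr = {Mod(κ^k(τ ∧ φ)) | k ∈ ℕ, Mod(κ^k(τ ∧ φ)) ≠ Triv} are cuttings for T and φ. -/

import Mathlib

variable {Sen M : Type*}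

/-- The class of models of a set of sentences in a satisfaction system. -/
def ModS (sat : M → Sen → Prop) (T : Set Sen) : Set M := {m | ∀ φ ∈ T, sat m φ}

/-- The trivial models: those satisfying every sentence. -/
def TrivS (sat : M → Sen → Prop) : Set M := {m | ∀ φ : Sen, sat m φ}

/-- A cutting for a knowledge base `T` and a sentence `φ`. -/
structure IsCutting (sat : M → Sen → Prop) (T : Set Sen) (φ : Sen) (C : Set (Set M)) : Prop where
  subset_mod : ∀ A ∈ C, A ⊆ ModS sat (T ∪ {φ})
  triv_lt : ∀ A ∈ C, TrivS sat ⊂ A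
  union_closed : ∀ S ⊆ C, S.Nonempty → ⋃₀ S ∈ C
  top_mem : ModS sat (T ∪ {φ}) ∈ C
  wf : C.WellFoundedOn (fun A B => A ⊂ B)

/-- The set of ⊆-minimal elements of a family of sets. -/
def MinCut (C : Set (Set M)) : Set (Set M) := {A ∈ C | ∀ B ∈ C, ¬ B ⊂ A}

/-- The explanatory relation based on a cutting `C` (for the observation whose cutting is `C`):
`ψ` is an explanation iff `Mod(T ∪ {ψ}) ≠ Triv` and `Mod(T ∪ {ψ})` is contained in some
minimal element of `C`. -/
def ExplRel (sat : M → Sen → Prop) (T : Set Sen) (C : Set (Set M)) (ψ : Sen) : Prop :=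
  ModS sat (T ∪ {ψ}) ≠ TrivS sat ∧ ∃ A ∈ MinCut C, ModS sat (T ∪ {ψ}) ⊆ A

/-!
Both families are the non-trivial members of a ⊆-decreasing sequence `Mod(ψ 0) ⊇ Mod(ψ 1) ⊇ ⋯`
that starts at `Mod(T ∪ {φ})`: anti-extensivity of `κ` gives the monotonicity, and vacuum makes
the sequence reach `Triv` after finitely many steps. So the family is finite (hence well-founded),
and each nonempty subfamily contains its union, namely its term of least index.
-/

lemma trivS_subset_modS (sat : M → Sen → Prop) (S : Set Sen) : TrivS sat ⊆ ModS sat S :=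
  fun _ hm ψ _ => hm ψ

lemma modS_union (sat : M → Sen → Prop) (S U : Set Sen) :
    ModS sat (S ∪ U) = ModS sat S ∩ ModS sat U := by
  ext m
  simp [ModS, or_imp, forall_and]

lemma sUnion_mem_of_subset_range_antitone {α : Type*} {f : ℕ → Set α} (hf : Antitone f)
    {S : Set (Set α)} (hS : S ⊆ Set.range f) (hne : S.Nonempty) : ⋃₀ S ∈ S := by
  have hex : ∃ k, f k ∈ S := by
    obtain ⟨A, hA⟩ := hne
    obtain ⟨k, rfl⟩ := hS hA
    exact ⟨k, hA⟩
  classical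
  have hunion : ⋃₀ S = f (Nat.find hex) := by
    refine subset_antisymm (Set.sUnion_subset fun A hA => ?_)
      (Set.subset_sUnion_of_mem (Nat.find_spec hex))
    obtain ⟨k, rfl⟩ := hS hA
    exact hf (Nat.find_min' hex hA)
  exact hunion ▸ Nat.find_spec hex

theorem isCutting_of_antitone (sat : M → Sen → Prop) (T : Set Sen) (φ : Sen)
    (hφ : ModS sat (T ∪ {φ}) ≠ TrivS sat) (ψ : ℕ → Sen)
    (hstep : ∀ k, ModS sat {ψ (k + 1)} ⊆ ModS sat {ψ k})
    (hzero : ModS sat {ψ 0} = ModS sat (T ∪ {φ}))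
    (hvac : ∃ N, ModS sat {ψ N} = TrivS sat) :
    IsCutting sat T φ {X | ∃ k, X = ModS sat {ψ k} ∧ X ≠ TrivS sat} := by
  set f : ℕ → Set M := fun k => ModS sat {ψ k}
  have hf : Antitone f := antitone_nat_of_succ_le hstep
  have hrange : {X | ∃ k, X = f k ∧ X ≠ TrivS sat} ⊆ Set.range f := by
    rintro _ ⟨k, rfl, -⟩
    exact ⟨k, rfl⟩
  refine ⟨?_, ?_, ?_, ⟨0, hzero.symm, hφ⟩, ?_⟩
  · rintro _ ⟨k, rfl, -⟩
    exact hzero ▸ hf k.zero_le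
  · rintro _ ⟨k, rfl, hk⟩
    exact (trivS_subset_modS sat _).ssubset_of_ne (Ne.symm hk)
  · intro S hS hne
    exact hS (sUnion_mem_of_subset_range_antitone hf (hS.trans hrange) hne)
  · obtain ⟨N, hN⟩ := hvac
    have hfin : {X | ∃ k, X = f k ∧ X ≠ TrivS sat}.Finite := by
      refine ((Set.finite_Iio N).image f).subset ?_
      rintro _ ⟨k, rfl, hk⟩
      refine ⟨k, Set.mem_Iio.mpr (not_le.mp fun hNk => hk ?_), rfl⟩
      exact subset_antisymm (hN ▸ hf hNk) (trivS_subset_modS sat _)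
    exact hfin.wellFoundedOn

theorem stmt_17_general (sat : M → Sen → Prop) (κ : Sen → Sen)
    (hanti : ∀ φ : Sen, ModS sat {κ φ} ⊆ ModS sat {φ})
    (hvac : ∀ φ : Sen, ModS sat {φ} ≠ TrivS sat →
      ∃ k : ℕ, ModS sat {κ^[k] φ} = TrivS sat)
    (T : Set Sen) (τ : Sen) (hτ : ModS sat {τ} = ModS sat T)
    (φ : Sen) (hφ : ModS sat (T ∪ {φ}) ≠ TrivS sat)
    (conj : Sen → Sen → Sen)
    (hconj : ∀ a b : Sen, ModS sat {conj a b} = ModS sat {a} ∩ ModS sat {b}) :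
    IsCutting sat T φ
        {X | ∃ k : ℕ, X = ModS sat {conj (κ^[k] τ) φ} ∧ X ≠ TrivS sat} ∧
      IsCutting sat T φ
        {X | ∃ k : ℕ, X = ModS sat {κ^[k] (conj τ φ)} ∧ X ≠ TrivS sat} := by
  have hunion : ModS sat (T ∪ {φ}) = ModS sat {τ} ∩ ModS sat {φ} := by rw [modS_union, hτ]
  have hτ_ne : ModS sat {τ} ≠ TrivS sat := fun h =>
    hφ (subset_antisymm (hunion ▸ h ▸ Set.inter_subset_left) (trivS_subset_modS sat _))
  have hzero : ModS sat {conj τ φ} = ModS sat (T ∪ {φ}) := by rw [hconj, hunion]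
  constructor
  · refine isCutting_of_antitone sat T φ hφ _ (fun k => ?_) hzero ?_
    · rw [hconj, hconj, Function.iterate_succ_apply']
      exact Set.inter_subset_inter_left _ (hanti _)
    · obtain ⟨N, hN⟩ := hvac τ hτ_ne
      exact ⟨N, by rw [hconj, hN, Set.inter_eq_left.mpr (trivS_subset_modS sat _)]⟩
  · refine isCutting_of_antitone sat T φ hφ _ (fun k => ?_) hzero
      (hvac _ (hzero ▸ hφ))
    rw [Function.iterate_succ_apply']
    exact hanti _

theorem stmt_17 (sat : M → Sen → Prop) (κ : Sen → Sen)
    (hanti : ∀ φ : Sen, ModS sat {κ φ} ⊆ ModS sat {φ})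
    (hvac : ∀ φ : Sen, ModS sat {φ} ≠ TrivS sat →
      ∃ k : ℕ, ModS sat {κ^[k] φ} = TrivS sat)
    (T : Set Sen) (hT : T.Finite) (τ : Sen) (hτ : ModS sat {τ} = ModS sat T)
    (φ : Sen) (hφ : ModS sat (T ∪ {φ}) ≠ TrivS sat)
    (conj : Sen → Sen → Sen)
    (hconj : ∀ a b : Sen, ModS sat {conj a b} = ModS sat {a} ∩ ModS sat {b}) :
    IsCutting sat T φ
        {X | ∃ k : ℕ, X = ModS sat {conj (κ^[k] τ) φ} ∧ X ≠ TrivS sat} ∧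
      IsCutting sat T φ
        {X | ∃ k : ℕ, X = ModS sat {κ^[k] (conj τ φ)} ∧ X ≠ TrivS sat} :=
  stmt_17_general sat κ hanti hvac T τ hτ φ hφ conj hconj
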